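/- arXiv:1612.07820 — 6 statements merged into one kernel-verified Lean document; each statement's English description precedes it below -/
import Mathlib

section
/- Let T : ℕ → ℕ be the Collatz map and S = T∘T∘T its third iterate. For every integer m ≥ 1 and every j with 0 ≤ j < 8^m, the number of even residues l with 0 ≤ l < 8^(m+1) such that S(l) ≡ j (mod 8^m) equals 5 if j is even and equals 3 if j is odd. -/
/-!
Write an even `l < 8 ^ (m + 1)` as `8 * k + r` with `k < N := 8 ^ m` and `r ∈ {0, 2, 4, 6}`;
then `S l` is `k`, `6 * k + 2`, `6 * k + 4`, `6 * k + 5` respectively. The first family hits every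
residue mod `N` exactly once. For the others write `N = 2 * M` with `3` coprime to `M`: the
congruence `6 * k + c ≡ j (mod 2 * M)` is `3 * k + c / 2 ≡ j / 2 (mod M)` when `c ≡ j (mod 2)`
and is unsolvable otherwise, so it has two solutions `k < N` or none. This gives `1 + 2 + 2`
preimages of an even `j` and `1 + 2` of an odd one.
-/

/-- The Collatz map. -/
def collatzT (n : ℕ) : ℕ := if n % 2 = 0 then n / 2 else 3 * n + 1

/-- Third iterate of the Collatz map. -/
def collatzS (n : ℕ) : ℕ := collatzT^[3] n

open Finset Function

lemma collatzS_eight_mul (k : ℕ) : collatzS (8 * k) = k := by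
  simp only [collatzS, iterate_succ, iterate_zero, comp_apply, id, collatzT]; split_ifs <;> omega

lemma collatzS_eight_mul_add_two (k : ℕ) : collatzS (8 * k + 2) = 6 * k + 2 := by
  simp only [collatzS, iterate_succ, iterate_zero, comp_apply, id, collatzT]; split_ifs <;> omega

lemma collatzS_eight_mul_add_four (k : ℕ) : collatzS (8 * k + 4) = 6 * k + 4 := by
  simp only [collatzS, iterate_succ, iterate_zero, comp_apply, id, collatzT]; split_ifs <;> omega

lemma collatzS_eight_mul_add_six (k : ℕ) : collatzS (8 * k + 6) = 6 * k + 5 := by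
  simp only [collatzS, iterate_succ, iterate_zero, comp_apply, id, collatzT]; split_ifs <;> omega

lemma card_filter_range_mul_eq_sum (p : ℕ → Prop) [DecidablePred p] (a b : ℕ) :
    #{l ∈ range (a * b) | p l} = ∑ r ∈ range b, #{k ∈ range a | p (b * k + r)} := by
  rcases b.eq_zero_or_pos with rfl | hb
  · simp
  rw [card_eq_sum_card_fiberwise (f := (· % b)) (t := range b)
    fun l _ => mem_range.2 (Nat.mod_lt l hb)]
  refine sum_congr rfl fun r hr => card_nbij' (· / b) (b * · + r) ?_ ?_ ?_ ?_
  all_goals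
    intro l hl
    simp only [coe_filter, mem_filter, mem_range, Set.mem_ofPred_eq] at hr hl ⊢
  · obtain ⟨⟨hl, hp⟩, rfl⟩ := hl
    exact ⟨Nat.div_lt_of_lt_mul (by rwa [mul_comm]), by rwa [Nat.div_add_mod]⟩
  · refine ⟨⟨?_, hl.2⟩, ?_⟩
    · nlinarith
    · rw [Nat.mul_add_mod, Nat.mod_eq_of_lt hr]
  · obtain ⟨-, rfl⟩ := hl
    exact Nat.div_add_mod l b
  · rw [Nat.mul_add_div hb, Nat.div_eq_of_lt hr, add_zero]

lemma Function.Periodic.count_mul {p : ℕ → Prop} [DecidablePred p] {a : ℕ} (hp : Periodic p a)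
    (n : ℕ) : Nat.count p (n * a) = n * Nat.count p a := by
  induction n with
  | zero => simp
  | succ n ih =>
    have hshift : (fun k => p (n * a + k)) = p := funext fun k => by
      rw [add_comm]; exact hp.nat_mul n k
    simp only [add_mul, one_mul, Nat.count_add, ih, hshift]

lemma Nat.mod_mul_eq_iff {x g M j : ℕ} (hg : 0 < g) :
    x % (g * M) = j ↔ x % g = j % g ∧ x / g % M = j / g := by
  rw [Nat.mod_mul, and_comm, eq_comm (a := x % g), eq_comm (a := x / g % M),
    Nat.div_mod_unique hg]
  exact ⟨fun h => ⟨h, Nat.mod_lt x hg⟩, And.left⟩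

lemma card_filter_range_mul_add_mod_eq_one {a M : ℕ} (c : ℕ) {j : ℕ} (ha : a.Coprime M)
    (hj : j < M) : #{k ∈ range M | (a * k + c) % M = j} = 1 := by
  have hinj : ∀ k₁ < M, ∀ k₂ < M, (a * k₁ + c) % M = (a * k₂ + c) % M → k₁ = k₂ := by
    intro k₁ h₁ k₂ h₂ h
    have : k₁ ≡ k₂ [MOD M] := (Nat.ModEq.add_right_cancel' c h).cancel_left_of_coprime ha.symm
    rwa [Nat.ModEq, Nat.mod_eq_of_lt h₁, Nat.mod_eq_of_lt h₂] at this
  obtain ⟨k₀, hk₀, hj₀⟩ := surj_on_of_inj_on_of_card_le (s := range M) (t := range M)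
    (fun k _ => (a * k + c) % M) (fun _ _ => mem_range.2 (Nat.mod_lt _ (Nat.zero_lt_of_lt hj)))
    (fun k₁ k₂ h₁ h₂ => hinj k₁ (mem_range.1 h₁) k₂ (mem_range.1 h₂)) le_rfl j (mem_range.2 hj)
  refine card_eq_one.2 ⟨k₀, ?_⟩
  ext k
  simp only [mem_filter, mem_range, mem_singleton]
  constructor
  · rintro ⟨hk, rfl⟩
    exact hinj k hk k₀ (mem_range.1 hk₀) hj₀
  · rintro rfl
    exact ⟨mem_range.1 hk₀, hj₀.symm⟩

lemma card_filter_range_mul_mul_add_mod_eq {g a M : ℕ} (c : ℕ) {j : ℕ} (ha : a.Coprime M)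
    (hj : j < g * M) :
    #{k ∈ range (g * M) | (g * a * k + c) % (g * M) = j} = if c % g = j % g then g else 0 := by
  have hg : 0 < g := Nat.pos_of_ne_zero (by rintro rfl; simp at hj)
  have hperiodic : Periodic (fun k => (g * a * k + c) % (g * M) = j) M := fun k => by
    dsimp only
    rw [show g * a * (k + M) + c = g * a * k + c + a * (g * M) by ring,
      Nat.add_mul_mod_self_right]
  have hsplit (k : ℕ) :
      (g * a * k + c) % (g * M) = j ↔ c % g = j % g ∧ (a * k + c / g) % M = j / g := by
    rw [Nat.mod_mul_eq_iff hg, mul_assoc, Nat.mul_add_mod, Nat.mul_add_div hg]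
  rw [← Nat.count_eq_card_filter_range, hperiodic.count_mul, Nat.count_eq_card_filter_range]
  simp only [hsplit]
  split_ifs with hc
  · simp only [hc, true_and, card_filter_range_mul_add_mod_eq_one _ ha (Nat.div_lt_of_lt_mul hj),
      mul_one]
  · simp [hc]

theorem stmt_5 :
    ∀ m : ℕ, 1 ≤ m → ∀ j : ℕ, j < 8 ^ m →
      ((Finset.range (8 ^ (m + 1))).filter
          (fun l => l % 2 = 0 ∧ collatzS l % 8 ^ m = j)).card =
        if j % 2 = 0 then 5 else 3 := by
  intro m hm j hj
  obtain ⟨M, hM⟩ : 2 ∣ 8 ^ m := dvd_pow (by norm_num) (by omega)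
  have hcop : Nat.Coprime 3 M :=
    (Nat.Coprime.pow_right m (by norm_num)).coprime_dvd_right (Dvd.intro_left 2 hM.symm)
  have hmod_two (k r : ℕ) : (8 * k + r) % 2 = r % 2 := by omega
  rw [pow_succ, card_filter_range_mul_eq_sum]
  simp only [sum_range_succ, sum_range_zero, hmod_two, Nat.reduceMod, true_and, one_ne_zero,
    false_and, filter_false, card_empty, add_zero, zero_add, collatzS_eight_mul,
    collatzS_eight_mul_add_two, collatzS_eight_mul_add_four, collatzS_eight_mul_add_six]
  rw [hM] at hj ⊢
  have hidentity := card_filter_range_mul_add_mod_eq_one 0 (Nat.coprime_one_left (2 * M)) hj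
  have hlinear (c : ℕ) := card_filter_range_mul_mul_add_mod_eq (g := 2) c hcop hj
  simp only [one_mul, add_zero] at hidentity
  norm_num at hlinear
  rw [hidentity, hlinear, hlinear, hlinear]
  split_ifs <;> omega
end

section
/- Let T : ℕ → ℕ be the Collatz map and S = T∘T∘T its third iterate. For every integer m ≥ 1 and every j with 0 ≤ j < 8^m, the number of odd residues l with 0 ≤ l < 8^(m+1) such that S(l) ≡ j (mod 8^m) equals 6 if j is even and equals 2 if j is odd. -/
/-!
An odd `l` is `4k + 1` or `4k + 3`, and `S (4k + 1) = 3k + 1`, `S (4k + 3) = 18k + 16`; the odd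
`l < 8^(m+1)` correspond to `k < 2 · 8^m`. Since `3` is a unit mod `8^m`, the map `k ↦ 3k + 1`
hits every residue mod `8^m` exactly twice on that range. The map `k ↦ 18k + 16 = 2 (9k + 8)` only
hits even residues `j = 2j'`, and it hits `j` whenever `9k + 8 ≡ j' (mod 8^m / 2)`, which happens
four times since `9` is a unit mod `8^m / 2`. This gives `2 + 4` for even `j` and `2` for odd `j`.
-/

open Finset

theorem card_filter_range_mul_affine_mod_eq {n a j : ℕ} (b c : ℕ) (ha : a.Coprime n)
    (hj : j < n) : #{k ∈ range (c * n) | (a * k + b) % n = j} = c := by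
  have : NeZero n := ⟨by omega⟩
  set v : ℕ := ((ZMod.unitOfCoprime a ha)⁻¹ * ((j : ZMod n) - b) : ZMod n).val
  have hv : ∀ k, (a * k + b) % n = j ↔ k ≡ v [MOD n] := by
    intro k
    rw [← Nat.mod_eq_of_lt hj, ← Nat.ModEq, ← ZMod.natCast_eq_natCast_iff,
      ← ZMod.natCast_eq_natCast_iff, ZMod.natCast_val, ZMod.cast_id', id,
      Units.eq_inv_mul_iff_mul_eq, ZMod.coe_unitOfCoprime, eq_sub_iff_add_eq]
    push_cast
    rfl
  rw [filter_congr fun k _ ↦ hv k, ← Nat.count_eq_card_filter_range,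
    Nat.count_modEq_card _ (by omega)]
  simp [Nat.pos_of_neZero n]

theorem card_filter_odd_range_four_mul (c : ℕ) (p : ℕ → Prop) [DecidablePred p] :
    #{l ∈ range (4 * c) | l % 2 = 1 ∧ p l} =
      #{k ∈ range c | p (4 * k + 1)} + #{k ∈ range c | p (4 * k + 3)} := by
  have hinj (r : ℕ) : Function.Injective (4 * · + r) := fun _ _ h ↦ by simp only at h; omega
  have hsplit : {l ∈ range (4 * c) | l % 2 = 1 ∧ p l} =
      {k ∈ range c | p (4 * k + 1)}.image (4 * · + 1) ∪
        {k ∈ range c | p (4 * k + 3)}.image (4 * · + 3) := by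
    ext l
    simp only [mem_filter, mem_range, mem_union, mem_image]
    constructor
    · rintro ⟨hl, hodd, hp⟩
      obtain h | h : l % 4 = 1 ∨ l % 4 = 3 := by omega
      · exact .inl ⟨l / 4, ⟨by omega, by rwa [show 4 * (l / 4) + 1 = l by omega]⟩, by omega⟩
      · exact .inr ⟨l / 4, ⟨by omega, by rwa [show 4 * (l / 4) + 3 = l by omega]⟩, by omega⟩
    · rintro (⟨k, ⟨hk, hp⟩, rfl⟩ | ⟨k, ⟨hk, hp⟩, rfl⟩) <;> exact ⟨by omega, by omega, hp⟩
  have hdisj : Disjoint ({k ∈ range c | p (4 * k + 1)}.image (4 * · + 1))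
      ({k ∈ range c | p (4 * k + 3)}.image (4 * · + 3)) := by
    simp only [disjoint_left, mem_image]
    rintro _ ⟨k, -, rfl⟩ ⟨k', -, h⟩
    omega
  rw [hsplit, card_union_of_disjoint hdisj, card_image_of_injective _ (hinj 1),
    card_image_of_injective _ (hinj 3)]

theorem collatzS_four_mul_add_one (k : ℕ) : collatzS (4 * k + 1) = 3 * k + 1 := by
  simp only [collatzS, Function.iterate_succ, Function.iterate_zero, Function.comp_apply,
    id, collatzT]
  split_ifs <;> omega

theorem collatzS_four_mul_add_three (k : ℕ) : collatzS (4 * k + 3) = 18 * k + 16 := by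
  simp only [collatzS, Function.iterate_succ, Function.iterate_zero, Function.comp_apply,
    id, collatzT]
  split_ifs <;> omega

theorem stmt_6 :
    ∀ m : ℕ, 1 ≤ m → ∀ j : ℕ, j < 8 ^ m →
      ((Finset.range (8 ^ (m + 1))).filter
          (fun l => l % 2 = 1 ∧ collatzS l % 8 ^ m = j)).card =
        if j % 2 = 0 then 6 else 2 := by
  intro m hm j hj
  have hcop (a : ℕ) (ha : a.Coprime 8) : a.Coprime (8 ^ m) := ha.pow_right m
  obtain ⟨M, hM⟩ : 2 ∣ 8 ^ m := dvd_pow (by norm_num) (by omega)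
  have h18 (k : ℕ) : (18 * k + 16) % 8 ^ m = j ↔ j % 2 = 0 ∧ (9 * k + 8) % M = j / 2 := by
    rw [hM, show 18 * k + 16 = 2 * (9 * k + 8) by ring, Nat.mul_mod_mul_left]
    omega
  rw [show 8 ^ (m + 1) = 4 * (2 * 8 ^ m) by ring, card_filter_odd_range_four_mul]
  simp only [collatzS_four_mul_add_one, collatzS_four_mul_add_three, h18]
  rw [card_filter_range_mul_affine_mod_eq 1 2 (hcop 3 (by norm_num)) hj]
  split_ifs with hj2
  · simp only [hj2, true_and]
    rw [show 2 * 8 ^ m = 4 * M by omega, card_filter_range_mul_affine_mod_eq 8 4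
      (Nat.Coprime.coprime_dvd_right (Dvd.intro_left _ hM.symm) (hcop 9 (by norm_num))) (by omega)]
  · simp [hj2]
end

section
/- For every integer m ≥ 1, the function μ_m is a probability distribution on ℕ: the series ∑_{n ∈ ℕ} μ_m(n) converges and its sum equals 1. -/
/-!
Split `n = k * 8 ^ m + j` with `j < 8 ^ m`. Since `8 ^ m` is even, `ν n = ν j`, so `μ_m n` factors
as `(1/2) ^ (k + 1)` times `(1/8) ^ (m - 1) ν j`. Each block of `8 ^ m` consecutive weights
`ν j` sums to `8 ^ m / 8`, which cancels against `(1/8) ^ (m - 1)`, and the geometric series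
`∑ (1/2) ^ (k + 1)` is `1`.
-/

/-- The weight ν: 1/6 on even integers, 1/12 on odd integers. -/
noncomputable def nuWeight (n : ℕ) : ℝ := if n % 2 = 0 then 1 / 6 else 1 / 12

/-- The measure μ_m of the singleton {n}. -/
noncomputable def muMeas (m n : ℕ) : ℝ :=
  (1 / 2 : ℝ) ^ (n / 8 ^ m + 1) * (1 / 8 : ℝ) ^ (m - 1) * nuWeight n

open Finset

theorem hasSum_div_mul_mod {f g : ℕ → ℝ} {a : ℝ} (N : ℕ) [NeZero N] (hf : HasSum f a) :
    HasSum (fun n => f (n / N) * g (n % N)) (a * ∑ j ∈ range N, g j) := by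
  have hg : HasSum (fun j : Fin N => g j) (∑ j ∈ range N, g j) := by
    rw [← Fin.sum_univ_eq_sum_range]
    exact hasSum_fintype _
  have hsum : Summable fun p : ℕ × Fin N => f p.1 * g p.2 :=
    summable_mul_of_summable_norm (g := fun j : Fin N => g j)
      (by simpa only [Real.norm_eq_abs] using hf.summable.abs) Summable.of_finite
  have hcomp : (fun n => f (n / N) * g (n % N)) =
      (fun p : ℕ × Fin N => f p.1 * g p.2) ∘ Nat.divModEquiv N := by
    funext n
    simp only [Function.comp_apply, Nat.divModEquiv_apply, Fin.val_ofNat]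
  rw [hcomp, (Nat.divModEquiv N).hasSum_iff]
  exact hf.mul hg hsum

theorem hasSum_half_pow_succ : HasSum (fun k : ℕ => (1 / 2 : ℝ) ^ (k + 1)) 1 := by
  have h := hasSum_geometric_two.mul_right (1 / 2)
  rw [show (2 : ℝ) * (1 / 2) = 1 by norm_num] at h
  simpa only [← pow_succ] using h

theorem nuWeight_mod {N : ℕ} (hN : 2 ∣ N) (n : ℕ) : nuWeight (n % N) = nuWeight n := by
  simp only [nuWeight, Nat.mod_mod_of_dvd n hN]

theorem sum_range_two_mul_nuWeight (t : ℕ) : ∑ j ∈ range (2 * t), nuWeight j = t / 4 := by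
  induction t with
  | zero => simp
  | succ t ih =>
    rw [Nat.mul_succ, sum_range_succ, sum_range_succ, ih]
    simp only [nuWeight, Nat.mul_mod_right, Nat.mul_add_mod_self_left, Nat.mod_succ, ↓reduceIte,
      one_ne_zero, Nat.cast_add, Nat.cast_one]
    ring

theorem stmt_7 :
    ∀ m : ℕ, 1 ≤ m →
      Summable (fun n : ℕ => muMeas m n) ∧ ∑' n : ℕ, muMeas m n = 1 := by
  intro m hm
  obtain ⟨k, rfl⟩ := Nat.exists_eq_add_of_le' hm
  have hblock : ∑ j ∈ range (8 ^ (k + 1)), (1 / 8 : ℝ) ^ k * nuWeight j = 1 := by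
    rw [← mul_sum, show 8 ^ (k + 1) = 2 * (4 * 8 ^ k) by ring, sum_range_two_mul_nuWeight]
    push_cast
    field_simp
    rw [← mul_pow]
    norm_num
  have h := hasSum_div_mul_mod (g := fun j => (1 / 8 : ℝ) ^ k * nuWeight j) (8 ^ (k + 1))
    hasSum_half_pow_succ
  rw [hblock, mul_one] at h
  have hμ : (fun n => muMeas (k + 1) n) =
      fun n => (1 / 2 : ℝ) ^ (n / 8 ^ (k + 1) + 1) * ((1 / 8) ^ k * nuWeight (n % 8 ^ (k + 1))) := by
    funext n
    rw [nuWeight_mod (dvd_pow (by norm_num) k.succ_ne_zero), muMeas, Nat.add_sub_cancel, mul_assoc]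
  rw [hμ]
  exact ⟨h.summable, h.tsum_eq⟩
end

section
/- For every integer m ≥ 1 and every j with 0 ≤ j < 8^m, the μ_m-measure of the congruence class B(j,8^m) = {n ∈ ℕ : n ≡ j (mod 8^m)} equals ν(j)/8^(m-1); that is, ∑_{n ≡ j (mod 8^m)} μ_m(n) = (1/6)·(1/8)^(m-1) if j is even and (1/12)·(1/8)^(m-1) if j is odd. -/
/-!
Write `n ≡ j (mod 8^m)` as `n = k * 8^m + j`. Then `⌊n / 8^m⌋ = k`, and `ν(n) = ν(j)` because
`8^m` is even for `m ≥ 1`, so the class sums to `ν(j) (1/8)^(m-1) ∑ₖ (1/2)^(k+1)`, and the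
geometric series equals `1`.
-/

theorem tsum_ite_mod_eq {α : Type*} [AddCommMonoid α] [TopologicalSpace α]
    {q j : ℕ} (hq : 0 < q) (hj : j < q) (f : ℕ → α) :
    ∑' n : ℕ, (if n % q = j then f n else 0) = ∑' k : ℕ, f (k * q + j) := by
  have hinj : Function.Injective fun k : ℕ => k * q + j := fun a b hab =>
    Nat.eq_of_mul_eq_mul_right hq (Nat.add_right_cancel hab)
  have hsupp : (Function.support fun n => if n % q = j then f n else 0)
      ⊆ Set.range fun k : ℕ => k * q + j := by
    intro n hn
    have hn : n % q = j := by
      by_contra h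
      exact hn (if_neg h)
    exact ⟨n / q, by simp only [← hn, Nat.div_add_mod']⟩
  rw [← hinj.tsum_eq hsupp]
  refine tsum_congr fun k => ?_
  rw [if_pos (by rw [Nat.mul_add_mod_self_right, Nat.mod_eq_of_lt hj])]

theorem nuWeight_mul_add {q : ℕ} (hq : Even q) (k j : ℕ) :
    nuWeight (k * q + j) = nuWeight j := by
  have : (k * q + j) % 2 = j % 2 := by
    rw [Nat.add_mod, Nat.mul_mod, Nat.even_iff.mp hq]
    simp
  rw [nuWeight, nuWeight, this]

theorem muMeas_mul_add {m : ℕ} (hm : 1 ≤ m) {j : ℕ} (hj : j < 8 ^ m) (k : ℕ) :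
    muMeas m (k * 8 ^ m + j) = (1 / 2 : ℝ) ^ (k + 1) * (nuWeight j * (1 / 8 : ℝ) ^ (m - 1)) := by
  have hdiv : (k * 8 ^ m + j) / 8 ^ m = k := by
    rw [Nat.mul_comm, Nat.mul_add_div (by positivity), Nat.div_eq_of_lt hj, Nat.add_zero]
  have heven : Even (8 ^ m) := (Nat.even_pow' (by omega)).mpr (by decide)
  rw [muMeas, hdiv, nuWeight_mul_add heven]
  ring

theorem tsum_one_half_pow_succ : ∑' k : ℕ, (1 / 2 : ℝ) ^ (k + 1) = 1 := by
  simp only [pow_succ, tsum_mul_right, tsum_geometric_two]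
  norm_num

theorem stmt_8 :
    ∀ m : ℕ, 1 ≤ m → ∀ j : ℕ, j < 8 ^ m →
      ∑' n : ℕ, (if n % 8 ^ m = j then muMeas m n else 0) =
        nuWeight j * (1 / 8 : ℝ) ^ (m - 1) := by
  intro m hm j hj
  rw [tsum_ite_mod_eq (by positivity) hj, tsum_congr (muMeas_mul_add hm hj), tsum_mul_right,
    tsum_one_half_pow_succ, one_mul]
end

section
/- k-step transition probabilities: let T : ℕ → ℕ be the Collatz map and S = T∘T∘T its third iterate. For every integer k ≥ 1 and all i, j ∈ {0,…,7}, the μ_(k+1)-measure of the set {n ∈ ℕ : n ≡ i (mod 8) and S^[k](n) ≡ j (mod 8)} equals ν(i) · (Q*^k)(i,j), where Q*^k is the k-th matrix power of Q*. Equivalently, the k-step transition probability of the induced chain from class i to class j equals the (i,j) entry of the k-th power of Q*. -/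
/-- The transition matrix Q* of the mod-8 Collatz Markov chain. -/
noncomputable def Qstar : Matrix (Fin 8) (Fin 8) ℝ := fun i j =>
  if i = 0 then 1 / 8
  else if i = 1 ∨ i = 6 then (if j = 1 ∨ j = 3 ∨ j = 5 ∨ j = 7 then 1 / 4 else 0)
  else if i = 2 ∨ i = 4 ∨ i = 5 then (if j = 0 ∨ j = 2 ∨ j = 4 ∨ j = 6 then 1 / 4 else 0)
  else if i = 3 then (if j = 0 ∨ j = 4 then 1 / 2 else 0)
  else (if j = 2 ∨ j = 6 then 1 / 2 else 0)

/-!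
The first `t` Collatz steps act affinely on residue classes:
`T^[t] (2 ^ t c + n) = 6 ^ σ c + T^[t] n`, where `σ` is the number of odd values among
`n, T n, …, T^[t-1] n`. Hence `S^[k] n` modulo 8 depends only on `n` modulo `8 ^ (k + 1)`, and
since `μ_(k+1)` gives each block of `8 ^ (k + 1)` consecutive integers a geometric weight, the
measure in question is `(1/8)^k ν(i)` times the number of residues `s` modulo `8 ^ (k + 1)` with
`s ≡ i` and `S^[k] s ≡ j` modulo 8.

For `t = 3` the formula reads `S (8 m + i) = 2 ^ σ 3 ^ σ m + S i`. As `3 ^ σ` is invertible modulo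
powers of 2, when `m` runs over the residues modulo `8 ^ (k + 1)` the values `S (8 m + i)` cover
the residue class of `S i` modulo `2 ^ σ` uniformly, each residue `2 ^ σ` times. Row `i` of `8 Q*`
is `2 ^ σ` times the indicator of that class, so the counts satisfy `count_(k+1) = 8 Q* count_k`.
-/

open Finset

lemma collatzT_two_mul_add (d n : ℕ) : collatzT (2 * d + n) = 6 ^ (n % 2) * d + collatzT n := by
  unfold collatzT
  rw [Nat.mul_add_mod]
  split_ifs with h
  · rw [h, Nat.mul_add_div two_pos]; ring
  · rw [show n % 2 = 1 by omega]; ring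

lemma collatzT_iterate_two_pow_mul_add (t c n : ℕ) :
    collatzT^[t] (2 ^ t * c + n) =
      6 ^ (∑ s ∈ range t, collatzT^[s] n % 2) * c + collatzT^[t] n := by
  induction t generalizing c n with
  | zero => simp
  | succ t ih =>
    rw [Function.iterate_succ_apply, pow_succ', mul_assoc, collatzT_two_mul_add, mul_left_comm,
      ih, sum_range_succ', pow_add, Function.iterate_succ_apply]
    simp only [Function.iterate_succ_apply, Function.iterate_zero_apply]
    ring

lemma collatzT_iterate_modEq (t : ℕ) {a n m : ℕ} (h : n ≡ m [MOD 2 ^ (t + a)]) :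
    collatzT^[t] n ≡ collatzT^[t] m [MOD 2 ^ a] := by
  wlog hnm : n ≤ m generalizing n m
  · exact (this h.symm (le_of_not_ge hnm)).symm
  obtain ⟨c, hc⟩ := (Nat.modEq_iff_dvd' hnm).1 h
  have hm : m = 2 ^ t * (2 ^ a * c) + n := by rw [← mul_assoc, ← pow_add, ← hc]; omega
  rw [hm, collatzT_iterate_two_pow_mul_add, mul_left_comm]
  exact (Nat.mul_add_mod _ _ _).symm

lemma collatzS_iterate (k : ℕ) : collatzS^[k] = collatzT^[3 * k] :=
  (Function.iterate_mul collatzT 3 k).symm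

lemma collatzS_iterate_mod_eight (k : ℕ) {n m : ℕ} (h : n ≡ m [MOD 8 ^ (k + 1)]) :
    collatzS^[k] n % 8 = collatzS^[k] m % 8 := by
  rw [collatzS_iterate]
  exact collatzT_iterate_modEq (3 * k) (a := 3) (by rwa [pow_add, pow_mul, ← pow_succ])

def collatzOddSteps (n : ℕ) : ℕ := ∑ t ∈ range 3, collatzT^[t] n % 2

lemma collatzOddSteps_le (n : ℕ) : collatzOddSteps n ≤ 3 :=
  (sum_le_sum fun t _ => Nat.le_of_lt_succ (Nat.mod_lt _ two_pos)).trans_eq (by simp)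

lemma collatzS_eight_mul_add (m n : ℕ) :
    collatzS (8 * m + n) = 6 ^ collatzOddSteps n * m + collatzS n :=
  collatzT_iterate_two_pow_mul_add 3 m n

lemma eight_mul_Qstar (i l : Fin 8) :
    8 * Qstar i l = if l % 2 ^ collatzOddSteps i = collatzS i % 2 ^ collatzOddSteps i
      then (2 ^ collatzOddSteps i : ℝ) else 0 := by
  fin_cases i <;> fin_cases l <;>
    norm_num [Qstar, collatzS, collatzOddSteps, sum_range_succ, collatzT, Fin.ext_iff]

section RangeSums

variable {M : Type*} [AddCommMonoid M]

lemma sum_range_mul_eq_sum_sum (a b : ℕ) (f : ℕ → M) :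
    ∑ s ∈ range (a * b), f s = ∑ q ∈ range a, ∑ r ∈ range b, f (b * q + r) := by
  induction a with
  | zero => simp
  | succ a ih => rw [Nat.succ_mul, sum_range_add, ih, sum_range_succ, mul_comm a b]

lemma sum_range_mul_ite_mod_eq {c r : ℕ} (hr : r < c) (N : ℕ) (f : ℕ → M) :
    ∑ s ∈ range (N * c), (if s % c = r then f s else 0) = ∑ m ∈ range N, f (c * m + r) := by
  rw [sum_range_mul_eq_sum_sum]
  refine sum_congr rfl fun m _ => ?_
  rw [sum_congr rfl fun r' hr' => by rw [Nat.mul_add_mod, Nat.mod_eq_of_lt (mem_range.1 hr')],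
    sum_ite_eq', if_pos (mem_range.2 hr)]

lemma Function.Periodic.sum_range_mul {f : ℕ → M} {N : ℕ} (hf : Function.Periodic f N)
    (d : ℕ) : ∑ m ∈ range (d * N), f m = d • ∑ m ∈ range N, f m := by
  have hshift (q : ℕ) : ∑ c ∈ range N, f (N * q + c) = ∑ c ∈ range N, f c :=
    sum_congr rfl fun c _ => by rw [add_comm, mul_comm, ← smul_eq_mul, hf.nsmul q c]
  rw [sum_range_mul_eq_sum_sum, sum_congr rfl fun q _ => hshift q, sum_const, card_range]

lemma sum_range_mul_add_mod {u N : ℕ} (hu : u.Coprime N) (t : ℕ) (f : ℕ → M) :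
    ∑ c ∈ range N, f ((u * c + t) % N) = ∑ c ∈ range N, f c := by
  have hmaps : ∀ c ∈ range N, (u * c + t) % N ∈ range N := fun c hc =>
    mem_range.2 (Nat.mod_lt _ (Nat.zero_lt_of_lt (mem_range.1 hc)))
  have hinj : Set.InjOn (fun c => (u * c + t) % N) (range N) := fun c₁ h₁ c₂ h₂ h =>
    (Nat.ModEq.cancel_left_of_coprime (Nat.coprime_comm.1 hu)
      (Nat.ModEq.add_right_cancel' t h)).eq_of_lt_of_lt (mem_range.1 h₁) (mem_range.1 h₂)
  exact sum_nbij _ hmaps hinj (surjOn_of_injOn_of_card_le _ hmaps hinj le_rfl) fun _ _ => rfl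

lemma mul_add_mod_mul_of_lt {d r : ℕ} (h : r < d) (x N : ℕ) :
    (d * x + r) % (d * N) = d * (x % N) + r := by
  rw [Nat.mod_mul, Nat.mul_add_mod, Nat.mod_eq_of_lt h, Nat.mul_add_div (by omega),
    Nat.div_eq_of_lt h, add_zero, add_comm]

lemma sum_range_mul_mul_add_mod {d u N : ℕ} (hu : u.Coprime N) (b : ℕ) (g : ℕ → M) :
    ∑ m ∈ range (d * N), g ((d * u * m + b) % (d * N)) =
      d • ∑ s ∈ range (N * d), if s % d = b % d then g s else 0 := by
  rcases d.eq_zero_or_pos with rfl | hd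
  · simp
  have hper : Function.Periodic (fun m => g ((d * u * m + b) % (d * N))) N := fun m => by
    dsimp only
    rw [show d * u * (m + N) + b = d * u * m + b + d * N * u by ring, Nat.add_mul_mod_self_left]
  have hb : b = d * (b / d) + b % d := (Nat.div_add_mod b d).symm
  rw [hper.sum_range_mul, sum_range_mul_ite_mod_eq (Nat.mod_lt b hd)]
  congr 1
  calc ∑ c ∈ range N, g ((d * u * c + b) % (d * N))
      = ∑ c ∈ range N, g (d * ((u * c + b / d) % N) + b % d) := by
        refine sum_congr rfl fun c _ => ?_
        rw [← mul_add_mod_mul_of_lt (Nat.mod_lt b hd)]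
        congr 2
        nth_rw 1 [hb]
        ring
    _ = ∑ c ∈ range N, g (d * c + b % d) :=
        sum_range_mul_add_mod hu (b / d) fun c => g (d * c + b % d)

end RangeSums

noncomputable def collatzTransitionCount (k : ℕ) (i j : Fin 8) : ℝ :=
  ∑ s ∈ range (8 ^ (k + 1)), if s % 8 = i ∧ collatzS^[k] s % 8 = j then 1 else 0

lemma collatzTransitionCount_zero (i j : Fin 8) :
    collatzTransitionCount 0 i j = (1 : Matrix (Fin 8) (Fin 8) ℝ) i j := by
  rw [collatzTransitionCount, ← Fin.sum_univ_eq_sum_range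
    (fun s => if s % 8 = i ∧ collatzS^[0] s % 8 = j then (1 : ℝ) else 0)]
  simp [Nat.mod_eq_of_lt, Fin.val_inj, Matrix.one_apply, ite_and]

lemma collatzTransitionCount_succ (k : ℕ) (i j : Fin 8) :
    collatzTransitionCount (k + 1) i j = ∑ l, 8 * Qstar i l * collatzTransitionCount k l j := by
  obtain ⟨a, ha⟩ : ∃ a, collatzOddSteps i = a := ⟨_, rfl⟩
  set g : ℕ → ℝ := fun s => if collatzS^[k] s % 8 = j then 1 else 0 with hg
  have ha8 : 2 ^ a ∣ 8 := ha ▸ pow_dvd_pow 2 (collatzOddSteps_le i)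
  obtain ⟨N, hN⟩ : 2 ^ a ∣ 8 ^ (k + 1) := ha8.trans (dvd_pow_self 8 k.succ_ne_zero)
  have hcop : (3 ^ a).Coprime N :=
    Nat.Coprime.coprime_dvd_right (Dvd.intro_left _ hN.symm)
      (Nat.Coprime.pow _ _ (by norm_num : Nat.Coprime 3 8))
  have lhs : collatzTransitionCount (k + 1) i j =
      ∑ m ∈ range (8 ^ (k + 1)), g ((6 ^ a * m + collatzS i) % 8 ^ (k + 1)) := by
    rw [collatzTransitionCount, pow_succ 8 (k + 1)]
    simp_rw [ite_and]
    rw [sum_range_mul_ite_mod_eq i.isLt]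
    refine sum_congr rfl fun m _ => ?_
    simp only [hg, Function.iterate_succ_apply, collatzS_eight_mul_add, ha]
    rw [collatzS_iterate_mod_eight k (Nat.mod_modEq _ _)]
  have rhs : ∑ l, 8 * Qstar i l * collatzTransitionCount k l j =
      2 ^ a • ∑ s ∈ range (8 ^ (k + 1)),
        if s % 2 ^ a = collatzS i % 2 ^ a then g s else 0 := by
    simp only [collatzTransitionCount, mul_sum, smul_sum]
    rw [sum_comm]
    refine sum_congr rfl fun s _ => ?_
    rw [Fintype.sum_eq_single (Fin.ofNat 8 s) fun l hl => ?_]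
    · rw [eight_mul_Qstar, ha, Fin.val_ofNat, Nat.mod_mod_of_dvd s ha8]
      simp only [hg, true_and, nsmul_eq_mul]
      split_ifs <;> simp
    · rw [if_neg, mul_zero]
      rintro ⟨h, -⟩
      exact hl (Fin.ext (by rw [Fin.val_ofNat, h]))
  rw [lhs, rhs, show 6 ^ a = 2 ^ a * 3 ^ a from mul_pow 2 3 a, hN,
    sum_range_mul_mul_add_mod hcop, mul_comm N]

lemma collatzTransitionCount_eq (k : ℕ) (i j : Fin 8) :
    collatzTransitionCount k i j = 8 ^ k * (Qstar ^ k) i j := by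
  induction k generalizing i j with
  | zero => simpa using collatzTransitionCount_zero i j
  | succ k ih =>
    simp_rw [collatzTransitionCount_succ, ih, pow_succ' Qstar, Matrix.mul_apply, mul_sum]
    exact sum_congr rfl fun l _ => by ring

lemma tsum_half_pow_div_mul_mod (M : ℕ) [NeZero M] (B : ℕ → ℝ) :
    ∑' n, (1 / 2 : ℝ) ^ (n / M + 1) * B (n % M) = ∑ r ∈ range M, B r := by
  have hgeom : ∑' q : ℕ, (1 / 2 : ℝ) ^ (q + 1) = 1 := by
    simp_rw [pow_succ, tsum_mul_right, tsum_geometric_two]; norm_num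
  have hsummable : Summable fun q : ℕ => ‖(1 / 2 : ℝ) ^ (q + 1)‖ := by
    simpa [pow_succ] using summable_geometric_two.mul_right (1 / 2 : ℝ)
  have hdivmod (p : ℕ × Fin M) :
      (p.1 * M + p.2) / M = p.1 ∧ (p.1 * M + p.2) % M = p.2 := by
    constructor
    · rw [add_comm, Nat.add_mul_div_right _ _ (NeZero.pos M), Nat.div_eq_of_lt p.2.isLt, zero_add]
    · rw [add_comm, Nat.add_mul_mod_self_right, Nat.mod_eq_of_lt p.2.isLt]
  rw [← (Nat.divModEquiv M).symm.tsum_eq]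
  simp only [Nat.divModEquiv_symm_apply, hdivmod]
  rw [← tsum_mul_tsum_of_summable_norm (g := fun r : Fin M => B r) hsummable Summable.of_finite,
    hgeom, one_mul, tsum_fintype, Fin.sum_univ_eq_sum_range]

theorem stmt_13 :
    ∀ k : ℕ, 1 ≤ k → ∀ i j : Fin 8,
      (∑' n : ℕ,
          (if n % 8 = (i : ℕ) ∧ collatzS^[k] n % 8 = (j : ℕ)
            then muMeas (k + 1) n else 0)) =
        nuWeight (i : ℕ) * (Qstar ^ k) i j := by
  intro k _ i j
  set M := 8 ^ (k + 1)
  set B : ℕ → ℝ := fun r =>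
    (1 / 8) ^ k * nuWeight i * if r % 8 = i ∧ collatzS^[k] r % 8 = j then 1 else 0 with hB
  have h8 : 8 ∣ M := dvd_pow_self 8 k.succ_ne_zero
  have hterm (n : ℕ) : (if n % 8 = i ∧ collatzS^[k] n % 8 = j then muMeas (k + 1) n else 0) =
      (1 / 2 : ℝ) ^ (n / M + 1) * B (n % M) := by
    simp only [hB]
    rw [Nat.mod_mod_of_dvd n h8, collatzS_iterate_mod_eight k (Nat.mod_modEq n _)]
    split_ifs with h
    · simp only [muMeas, nuWeight, ← h.1, Nat.mod_mod_of_dvd n (by norm_num : 2 ∣ 8),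
        Nat.add_sub_cancel]
      ring
    · simp
  calc _ = ∑' n, (1 / 2 : ℝ) ^ (n / M + 1) * B (n % M) := tsum_congr hterm
    _ = ∑ r ∈ range M, B r := tsum_half_pow_div_mul_mod M B
    _ = (1 / 8) ^ k * nuWeight i * collatzTransitionCount k i j := by
      rw [collatzTransitionCount, mul_sum]
    _ = nuWeight i * (Qstar ^ k) i j := by
      rw [collatzTransitionCount_eq, ← mul_assoc, mul_right_comm _ _ (8 ^ k : ℝ), ← mul_pow]
      norm_num
end

section
/- Stationarity for the refined chains: let T : ℕ → ℕ be the Collatz map and S = T∘T∘T its third iterate. For an integer m ≥ 1 and i, j ∈ {0,…,8^m − 1} let N_m(i,j) be the number of residues l with 0 ≤ l < 8^(m+1), l ≡ i (mod 8^m) and S(l) ≡ j (mod 8^m), and let w(i) = 2 if i is even and w(i) = 1 if i is odd. Then for every j with 0 ≤ j < 8^m, ∑_{i=0}^{8^m − 1} w(i)·N_m(i,j) = 8·w(j). Equivalently, the vector P_stat(m) with entries (1/6)·(1/8)^(m−1) at even indices and (1/12)·(1/8)^(m−1) at odd indices is stationary for the stochastic matrix Q(m) with entries N_m(i,j)/8.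 -/
def collatzNm (m i j : ℕ) : ℕ :=
  ((Finset.range (8 ^ (m + 1))).filter
    (fun l => l % 8 ^ m = i ∧ collatzS l % 8 ^ m = j)).card

def wWeight (i : ℕ) : ℕ := if i % 2 = 0 then 2 else 1

open Finset

@[simp]
lemma wWeight_two_mul (a : ℕ) : wWeight (2 * a) = 2 := by
  simp [wWeight]

@[simp]
lemma wWeight_two_mul_add_one (a : ℕ) : wWeight (2 * a + 1) = 1 := by
  simp [wWeight, Nat.add_mod]

lemma wWeight_mod_of_two_dvd {M : ℕ} (hM : 2 ∣ M) (l : ℕ) : wWeight (l % M) = wWeight l := by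
  simp only [wWeight, Nat.mod_mod_of_dvd l hM]

@[simp]
lemma collatzT_two_mul (a : ℕ) : collatzT (2 * a) = a := by
  simp [collatzT]

@[simp]
lemma collatzT_two_mul_add_one (a : ℕ) : collatzT (2 * a + 1) = 6 * a + 4 := by
  simp [collatzT, Nat.add_mod]
  ring

lemma collatzT_modEq {N n n' : ℕ} (h : n ≡ n' [MOD 2 * N]) : collatzT n ≡ collatzT n' [MOD N] := by
  have hpar : n % 2 = n' % 2 := h.of_mul_right N
  unfold collatzT
  split_ifs with hn hn' hn'
  · refine Nat.ModEq.mul_left_cancel' two_ne_zero ?_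
    rwa [Nat.mul_div_cancel' (Nat.dvd_of_mod_eq_zero hn),
      Nat.mul_div_cancel' (Nat.dvd_of_mod_eq_zero hn')]
  · omega
  · omega
  · exact ((h.of_mul_left 2).mul_left 3).add_right 1

lemma collatzT_iterate_modEq_s14 {N n n' : ℕ} (r : ℕ) (h : n ≡ n' [MOD 2 ^ r * N]) :
    collatzT^[r] n ≡ collatzT^[r] n' [MOD N] := by
  induction r generalizing n n' with
  | zero => simpa using h
  | succ r ih =>
    rw [Function.iterate_succ_apply, Function.iterate_succ_apply]
    exact ih (collatzT_modEq (by rwa [← mul_assoc, ← pow_succ']))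

lemma sum_range_two_mul {M : Type*} [AddCommMonoid M] (N : ℕ) (f : ℕ → M) :
    ∑ n ∈ range (2 * N), f n = ∑ a ∈ range N, (f (2 * a) + f (2 * a + 1)) := by
  induction N with
  | zero => simp
  | succ N ih => rw [Nat.mul_succ, sum_range_succ, sum_range_succ, sum_range_succ, ih, add_assoc]

lemma sum_range_affine_mod {M : Type*} [AddCommMonoid M] {c N : ℕ} (hc : c.Coprime N) (d : ℕ)
    (f : ℕ → M) : ∑ a ∈ range N, f ((c * a + d) % N) = ∑ b ∈ range N, f b := by
  rcases N.eq_zero_or_pos with rfl | hN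
  · simp
  have hmaps : Set.MapsTo (fun a => (c * a + d) % N) (range N) (range N) :=
    fun a _ => mem_range.mpr (Nat.mod_lt _ hN)
  have hinj : Set.InjOn (fun a => (c * a + d) % N) (range N) := fun a ha b hb hab =>
    ((Nat.ModEq.add_right_cancel' d hab).cancel_left_of_coprime hc.symm).eq_of_lt_of_lt
      (mem_range.mp ha) (mem_range.mp hb)
  exact sum_nbij _ hmaps hinj (surjOn_of_injOn_of_card_le _ hmaps hinj le_rfl) fun _ _ => rfl

lemma sum_range_two_mul_mod {M : Type*} [AddCommMonoid M] (N : ℕ) (f : ℕ → M) :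
    ∑ b ∈ range (2 * N), f (2 * b % (2 * N)) = 2 • ∑ b ∈ range N, f (2 * b) := by
  rw [two_mul N, sum_range_add, two_nsmul]
  congr 1 <;> refine sum_congr rfl fun b hb => ?_ <;> rw [mem_range] at hb <;> congr 1
  · exact Nat.mod_eq_of_lt (by omega)
  · rw [show 2 * (N + b) = 2 * b + (N + N) by ring, Nat.add_mod_right]
    exact Nat.mod_eq_of_lt (by omega)

section Stationarity

variable {M : Type*} [AddCommMonoid M]

lemma sum_wWeight_smul_collatzT_mod {k : ℕ} (hk : k ≠ 0) (f : ℕ → M) :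
    ∑ n ∈ range (2 ^ (k + 1)), wWeight n • f (collatzT n % 2 ^ k)
      = 2 • ∑ m ∈ range (2 ^ k), wWeight m • f m := by
  obtain ⟨N, hN⟩ : ∃ N, 2 ^ k = 2 * N := ⟨2 ^ (k - 1), by rw [← pow_succ']; congr 1; omega⟩
  have hodd : ∑ a ∈ range (2 ^ k), f ((6 * a + 4) % 2 ^ k) = 2 • ∑ b ∈ range N, f (2 * b) := by
    have hcop : Nat.Coprime 3 (2 ^ k) := Nat.Coprime.pow_right k (by norm_num)
    calc ∑ a ∈ range (2 ^ k), f ((6 * a + 4) % 2 ^ k)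
        = ∑ a ∈ range (2 ^ k), f (2 * ((3 * a + 2) % 2 ^ k) % 2 ^ k) := by
          refine sum_congr rfl fun a _ => congrArg f ?_
          rw [Nat.mul_mod_mod, show 6 * a + 4 = 2 * (3 * a + 2) by ring]
      _ = ∑ b ∈ range (2 ^ k), f (2 * b % 2 ^ k) :=
          sum_range_affine_mod hcop 2 fun b => f (2 * b % 2 ^ k)
      _ = 2 • ∑ b ∈ range N, f (2 * b) := by rw [hN, sum_range_two_mul_mod]
  calc ∑ n ∈ range (2 ^ (k + 1)), wWeight n • f (collatzT n % 2 ^ k)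
      = ∑ a ∈ range (2 ^ k), (2 • f a + f ((6 * a + 4) % 2 ^ k)) := by
        rw [pow_succ', sum_range_two_mul]
        refine sum_congr rfl fun a ha => ?_
        simp [Nat.mod_eq_of_lt (mem_range.mp ha)]
    _ = 2 • ∑ a ∈ range (2 ^ k), f a + 2 • ∑ b ∈ range N, f (2 * b) := by
        rw [sum_add_distrib, sum_nsmul, hodd]
    _ = 2 • ∑ m ∈ range (2 ^ k), wWeight m • f m := by
        simp only [hN, sum_range_two_mul, wWeight_two_mul, wWeight_two_mul_add_one, one_smul,
          sum_add_distrib, sum_nsmul]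
        abel

lemma sum_wWeight_smul_collatzT_iterate_mod {k : ℕ} (hk : k ≠ 0) (r : ℕ) (f : ℕ → M) :
    ∑ n ∈ range (2 ^ (k + r)), wWeight n • f (collatzT^[r] n % 2 ^ k)
      = 2 ^ r • ∑ m ∈ range (2 ^ k), wWeight m • f m := by
  induction r generalizing f with
  | zero =>
    rw [pow_zero, one_smul, add_zero]
    exact sum_congr rfl fun n hn => by
      rw [Function.iterate_zero_apply, Nat.mod_eq_of_lt (mem_range.mp hn)]
  | succ r ih =>
    have hreduce (n : ℕ) : collatzT^[r + 1] n % 2 ^ k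
        = collatzT^[r] (collatzT n % 2 ^ (k + r)) % 2 ^ k := by
      rw [Function.iterate_succ_apply]
      exact collatzT_iterate_modEq_s14 r (by rw [← pow_add, add_comm]; exact (Nat.mod_modEq _ _).symm)
    simp only [hreduce, ← add_assoc]
    rw [sum_wWeight_smul_collatzT_mod (by omega) fun x => f (collatzT^[r] x % 2 ^ k), ih,
      pow_succ', mul_smul]

end Stationarity

lemma sum_wWeight_mul_collatzNm {m : ℕ} (hm : m ≠ 0) (j : ℕ) :
    ∑ i ∈ range (8 ^ m), wWeight i * collatzNm m i j
      = ∑ l ∈ range (8 ^ (m + 1)), wWeight l * if collatzS l % 8 ^ m = j then 1 else 0 := by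
  have hmaps : ∀ l ∈ range (8 ^ (m + 1)), l % 8 ^ m ∈ range (8 ^ m) :=
    fun l _ => mem_range.mpr (Nat.mod_lt _ (by positivity))
  have heven : 2 ∣ 8 ^ m := dvd_pow (by norm_num) hm
  rw [← sum_fiberwise_of_maps_to hmaps]
  refine sum_congr rfl fun i _ => ?_
  calc wWeight i * collatzNm m i j
      = ∑ l ∈ range (8 ^ (m + 1)) with l % 8 ^ m = i,
          wWeight i * if collatzS l % 8 ^ m = j then 1 else 0 := by
        rw [← mul_sum, sum_boole, filter_filter, Nat.cast_id, collatzNm]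
    _ = _ := sum_congr rfl fun l hl => by
        rw [← (mem_filter.mp hl).2, wWeight_mod_of_two_dvd heven]

theorem stmt_14 :
    ∀ m : ℕ, 1 ≤ m → ∀ j : ℕ, j < 8 ^ m →
      ∑ i ∈ Finset.range (8 ^ m), wWeight i * collatzNm m i j = 8 * wWeight j := by
  intro m hm j hj
  have h8 (e : ℕ) : 8 ^ e = 2 ^ (3 * e) := by rw [pow_mul]; norm_num
  rw [h8] at hj
  rw [sum_wWeight_mul_collatzNm (by omega), h8, h8, mul_add_one]
  simpa [collatzS, hj] using sum_wWeight_smul_collatzT_iterate_mod (k := 3 * m) (by omega) 3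
    fun x => if x = j then (1 : ℕ) else 0
end
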